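/- Let K be an odd positive integer and let γ : {0,…,K} → [0,1] satisfy γ(l) ≥ γ(l+1) for every integer 0 ≤ l ≤ (K−1)/2 and γ(l) ≤ γ(l+1) for every integer (K+1)/2 ≤ l ≤ K−1. Then the function H : [0,1] → ℝ defined by H(β) = 1/2 + (1/2) Σ_{l=(K+1)/2}^{K} γ(l)·C(K,l) β^l (1−β)^{K−l} − (1/2) Σ_{l=0}^{(K−1)/2} γ(l)·C(K,l) β^l (1−β)^{K−l} is nondecreasing on [0,1]. (H(β) is the probability that DaRRM with noise function γ outputs 1 when the K mechanisms are i.i.d. with success probability β; hence the privacy cost objective f(p,p';γ) = H(p)/H(p') − 1 is maximized when p ≥ p'.) -/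

import Mathlib

/-!
Up to the affine map `t ↦ 1/2 + t/2`, `H` is the Bernstein polynomial of degree `K` whose
`l`-th coefficient is `-γ l` below the majority threshold `(K + 1) / 2` and `γ l` from it on.
The hypotheses on `γ` make these coefficients nondecreasing in `l` (across the threshold because
`γ ≥ 0`), and the derivative of a Bernstein polynomial is `K` times the Bernstein polynomial of
degree `K - 1` of the successive coefficient differences, which is therefore nonnegative on `[0,1]`.
-/

open Finset

/-- The probability that DaRRM with noise function `γ` outputs 1 when the `K`
i.i.d. binary mechanisms each succeed with probability `β`. -/
noncomputable def Hfun (K : ℕ) (γ : ℕ → ℝ) (β : ℝ) : ℝ :=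
  1 / 2
  + (1 / 2) * (∑ l ∈ Finset.Icc ((K + 1) / 2) K,
      γ l * (K.choose l : ℝ) * β ^ l * (1 - β) ^ (K - l))
  - (1 / 2) * ∑ l ∈ Finset.range ((K + 1) / 2),
      γ l * (K.choose l : ℝ) * β ^ l * (1 - β) ^ (K - l)

open Polynomial

namespace bernsteinPolynomial

variable {R : Type*} [CommRing R]

theorem derivative_sum_smul (n : ℕ) (c : ℕ → R) :
    derivative (∑ l ∈ range (n + 1 + 1), c l • bernsteinPolynomial R (n + 1) l) =
      (n + 1 : R[X]) * ∑ j ∈ range (n + 1), (c (j + 1) - c j) • bernsteinPolynomial R n j := by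
  have hshift : ∑ j ∈ range (n + 1), c (j + 1) • bernsteinPolynomial R n (j + 1) +
      c 0 • bernsteinPolynomial R n 0 = ∑ j ∈ range (n + 1), c j • bernsteinPolynomial R n j := by
    rw [← sum_range_succ' (fun j ↦ c j • bernsteinPolynomial R n j), sum_range_succ,
      eq_zero_of_lt R n.lt_succ_self, smul_zero, add_zero]
  simp only [derivative_sum, derivative_smul]
  rw [sum_range_succ', derivative_zero]
  simp only [derivative_succ_aux, Nat.add_sub_cancel, Nat.cast_succ, sub_smul, sum_sub_distrib]
  rw [← hshift]
  simp only [mul_smul_comm, smul_sub, mul_sub, mul_add, mul_sum, sum_sub_distrib, smul_neg, neg_mul]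
  ring

theorem eval_eq (n ν : ℕ) (x : R) :
    (bernsteinPolynomial R n ν).eval x = n.choose ν * x ^ ν * (1 - x) ^ (n - ν) := by
  simp [bernsteinPolynomial]

theorem eval_nonneg [PartialOrder R] [IsOrderedRing R] (n ν : ℕ) {x : R} (hx₀ : 0 ≤ x)
    (hx₁ : x ≤ 1) : 0 ≤ (bernsteinPolynomial R n ν).eval x := by
  rw [eval_eq]
  exact mul_nonneg (mul_nonneg (Nat.cast_nonneg _) (pow_nonneg hx₀ _))
    (pow_nonneg (sub_nonneg.2 hx₁) _)

theorem monotoneOn_eval_sum_smul {n : ℕ} {c : ℕ → ℝ} (hc : ∀ j < n, c j ≤ c (j + 1)) :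
    MonotoneOn (fun x ↦ (∑ l ∈ range (n + 1), c l • bernsteinPolynomial ℝ n l).eval x)
      (Set.Icc 0 1) := by
  cases n with
  | zero => simp [bernsteinPolynomial, monotoneOn_const]
  | succ n =>
    refine monotoneOn_of_deriv_nonneg (convex_Icc 0 1) (Polynomial.continuousOn _)
      (Polynomial.differentiable _).differentiableOn fun x hx ↦ ?_
    rw [interior_Icc] at hx
    rw [Polynomial.deriv, derivative_sum_smul, eval_mul, eval_finsetSum]
    refine mul_nonneg (by simp only [eval_add, eval_natCast, eval_one]; positivity)
      (sum_nonneg fun j hj ↦ ?_)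
    rw [eval_smul, smul_eq_mul]
    exact mul_nonneg (sub_nonneg.2 (hc j (mem_range.1 hj)))
      (eval_nonneg n j hx.1.le hx.2.le)

end bernsteinPolynomial

noncomputable def darrmCoeff (K : ℕ) (γ : ℕ → ℝ) (l : ℕ) : ℝ :=
  if l < (K + 1) / 2 then -γ l else γ l

theorem Hfun_eq_eval_bernstein (K : ℕ) (γ : ℕ → ℝ) :
    Hfun K γ = fun β ↦ 1 / 2 + 1 / 2 *
      (∑ l ∈ range (K + 1), darrmCoeff K γ l • bernsteinPolynomial ℝ K l).eval β := by
  ext β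
  rw [Hfun, eval_finsetSum, ← sum_range_add_sum_Ico _ (by omega : (K + 1) / 2 ≤ K + 1),
    Ico_add_one_right_eq_Icc]
  have hbelow : ∀ l ∈ range ((K + 1) / 2),
      (darrmCoeff K γ l • bernsteinPolynomial ℝ K l).eval β =
        -(γ l * K.choose l * β ^ l * (1 - β) ^ (K - l)) := fun l hl ↦ by
    rw [eval_smul, darrmCoeff, if_pos (mem_range.1 hl), bernsteinPolynomial.eval_eq, smul_eq_mul]
    ring
  have habove : ∀ l ∈ Icc ((K + 1) / 2) K,
      (darrmCoeff K γ l • bernsteinPolynomial ℝ K l).eval β =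
        γ l * K.choose l * β ^ l * (1 - β) ^ (K - l) := fun l hl ↦ by
    rw [eval_smul, darrmCoeff, if_neg (mem_Icc.1 hl).1.not_gt, bernsteinPolynomial.eval_eq,
      smul_eq_mul]
    ring
  rw [sum_congr rfl hbelow, sum_congr rfl habove, sum_neg_distrib]
  ring

theorem darrmCoeff_le_succ {K : ℕ} {γ : ℕ → ℝ} (hγ : ∀ l ≤ K, 0 ≤ γ l)
    (hmono1 : ∀ l ≤ (K - 1) / 2, γ (l + 1) ≤ γ l)
    (hmono2 : ∀ l, (K + 1) / 2 ≤ l → l ≤ K - 1 → γ l ≤ γ (l + 1)) {j : ℕ} (hj : j < K) :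
    darrmCoeff K γ j ≤ darrmCoeff K γ (j + 1) := by
  unfold darrmCoeff
  rcases lt_trichotomy (j + 1) ((K + 1) / 2) with hlt | heq | hgt
  · rw [if_pos hlt, if_pos (by omega)]
    exact neg_le_neg (hmono1 j (by omega))
  · rw [if_neg heq.not_lt, if_pos (by omega)]
    linarith [hγ j hj.le, hγ (j + 1) hj]
  · rw [if_neg (by omega), if_neg (by omega)]
    exact hmono2 j (by omega) (by omega)

theorem statement10_general (K : ℕ)
    (γ : ℕ → ℝ) (hγ01 : ∀ l ≤ K, 0 ≤ γ l ∧ γ l ≤ 1)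
    (hmono1 : ∀ l ≤ (K - 1) / 2, γ (l + 1) ≤ γ l)
    (hmono2 : ∀ l, (K + 1) / 2 ≤ l → l ≤ K - 1 → γ l ≤ γ (l + 1)) :
    MonotoneOn (Hfun K γ) (Set.Icc 0 1) := by
  have hbern := bernsteinPolynomial.monotoneOn_eval_sum_smul (c := darrmCoeff K γ) fun j hj ↦
    darrmCoeff_le_succ (fun l hl ↦ (hγ01 l hl).1) hmono1 hmono2 hj
  rw [Hfun_eq_eval_bernstein]
  intro a ha b hb hab
  linarith [hbern ha hb hab]

/-- under the monotonicity assumption on `γ`, the output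
probability `H` of DaRRM is nondecreasing on `[0,1]`. -/
theorem statement10 (K : ℕ) (hK : Odd K) (hKpos : 0 < K)
    (γ : ℕ → ℝ) (hγ01 : ∀ l ≤ K, 0 ≤ γ l ∧ γ l ≤ 1)
    (hmono1 : ∀ l ≤ (K - 1) / 2, γ (l + 1) ≤ γ l)
    (hmono2 : ∀ l, (K + 1) / 2 ≤ l → l ≤ K - 1 → γ l ≤ γ (l + 1)) :
    MonotoneOn (Hfun K γ) (Set.Icc 0 1) :=
  statement10_general K γ hγ01 hmono1 hmono2
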